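/- arXiv:2604.12713 — 5 statements merged into one kernel-verified Lean document; each statement's English description precedes it below -/
import Mathlib

section
/- The discrete Laplace mechanism is differentially private: for any ε > 0, any integers m, m' with |m − m'| ≤ 1, and any set S ⊆ ℤ, the probability that a sample from Lap_ε^m lies in S is at most e^ε times the probability that a sample from Lap_ε^{m'} lies in S. -/
open scoped Classical

noncomputable def lapW (ε : ℝ) : ℝ := ∑' z : ℤ, Real.exp (-ε * |(z : ℝ)|)

noncomputable def lapPMF (ε : ℝ) (m v : ℤ) : ℝ :=
  Real.exp (-ε * |(v : ℝ) - (m : ℝ)|) / lapW ε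

lemma lap_summable_base (ε : ℝ) (hε : 0 < ε) :
    Summable (fun z : ℤ => Real.exp (-ε * |(z : ℝ)|)) := by
  apply Summable.of_nat_of_neg
  · have : Summable (fun n : ℕ => Real.exp (-ε) ^ n) :=
      summable_geometric_of_lt_one (Real.exp_nonneg _)
        (Real.exp_lt_one_iff.mpr (by linarith))
    refine this.congr fun n => ?_
    rw [← Real.exp_nat_mul]
    congr 1
    simp [abs_of_nonneg (by positivity : (0:ℝ) ≤ (n:ℝ))]
    ring
  · have : Summable (fun n : ℕ => Real.exp (-ε) ^ n) :=
      summable_geometric_of_lt_one (Real.exp_nonneg _)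
        (Real.exp_lt_one_iff.mpr (by linarith))
    refine this.congr fun n => ?_
    rw [← Real.exp_nat_mul]
    congr 1
    simp [abs_of_nonneg (by positivity : (0:ℝ) ≤ (n:ℝ))]
    ring

lemma lap_summable (ε : ℝ) (hε : 0 < ε) (m : ℤ) :
    Summable (fun v : ℤ => Real.exp (-ε * |(v : ℝ) - (m : ℝ)|)) := by
  have := (lap_summable_base ε hε).comp_injective (Equiv.subRight m).injective
  refine this.congr fun v => ?_
  simp [Equiv.subRight]

lemma lapW_pos (ε : ℝ) (hε : 0 < ε) : 0 < lapW ε := by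
  have hs := lap_summable_base ε hε
  exact Summable.tsum_pos hs (fun z => (Real.exp_pos _).le) 0 (by simp [Real.exp_pos])

theorem laplace_mechanism_dp (ε : ℝ) (hε : 0 < ε) (m m' : ℤ) (hadj : |m - m'| ≤ 1)
    (S : Set ℤ) :
    ∑' v : S, lapPMF ε m v ≤ Real.exp ε * ∑' v : S, lapPMF ε m' v := by
  have hW := lapW_pos ε hε
  have hsum : ∀ k : ℤ, Summable (fun v : S => lapPMF ε k v) := by
    intro k
    exact ((lap_summable ε hε k).div_const _).subtype S
  have hpt : ∀ v : S, lapPMF ε m v ≤ Real.exp ε * lapPMF ε m' v := by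
    intro ⟨v, hv⟩
    unfold lapPMF
    rw [← mul_div_assoc]
    have key : Real.exp (-ε * |(v:ℝ) - m|) ≤ Real.exp ε * Real.exp (-ε * |(v:ℝ) - m'|) := by
      rw [← Real.exp_add]
      apply Real.exp_le_exp.mpr
      have h1 : |(v:ℝ) - m'| ≤ |(v:ℝ) - m| + 1 := by
        have : |(m:ℝ) - m'| ≤ 1 := by
          have := hadj
          calc |(m:ℝ) - m'| = |((m - m' : ℤ) : ℝ)| := by push_cast; ring_nf
          _ ≤ 1 := by rw [← Int.cast_abs]; exact_mod_cast hadj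
        have h2 := abs_sub_le ((v:ℝ)) (m:ℝ) (m':ℝ)
        linarith
      nlinarith [abs_nonneg ((v:ℝ) - m'), abs_nonneg ((v:ℝ) - m)]
    gcongr
  calc ∑' v : S, lapPMF ε m v ≤ ∑' v : S, Real.exp ε * lapPMF ε m' v := by
        apply Summable.tsum_le_tsum hpt (hsum m) ((hsum m').mul_left _)
  _ = Real.exp ε * ∑' v : S, lapPMF ε m' v := tsum_mul_left
end

section
/- Sequential composition of approximate couplings: suppose there is an (ε,δ)-approximate Φ-coupling between μ₁ ∈ Distr(A) and μ₂ ∈ Distr(B), and for every (a,b) ∈ Φ there is an (ε',δ')-approximate Ψ-coupling between f(a) and g(b), where f : A → Distr(A') and g : B → Distr(B'). Then there is an (ε+ε', δ+δ')-approximate Ψ-coupling between (μ₁ >>= f) and (μ₂ >>= g). -/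
set_option maxHeartbeats 1000000

noncomputable def dbind {A B : Type*} (μ : A → ℝ) (f : A → B → ℝ) : B → ℝ :=
  fun b => ∑' a, μ a * f a b

def IsSubdist {A : Type*} (μ : A → ℝ) : Prop :=
  (∀ a, 0 ≤ μ a) ∧ Summable μ ∧ ∑' a, μ a ≤ 1

def ACoupling {A B : Type*} (μ₁ : A → ℝ) (μ₂ : B → ℝ) (ε δ : ℝ) (Φ : A → B → Prop) : Prop :=
  ∀ (f : A → ℝ) (g : B → ℝ),
    (∀ a, 0 ≤ f a ∧ f a ≤ 1) → (∀ b, 0 ≤ g b ∧ g b ≤ 1) →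
    (∀ a b, Φ a b → f a ≤ g b) →
    ∑' a, μ₁ a * f a ≤ Real.exp ε * ∑' b, μ₂ b * g b + δ

section aux

variable {A A' : Type*}

lemma slice_summable (μ : A → ℝ) (f : A → A' → ℝ) (F : A' → ℝ)
    (hf : ∀ a, IsSubdist (f a)) (hF : ∀ x, 0 ≤ F x ∧ F x ≤ 1) (a : A) :
    Summable (fun x => f a x * F x) := by
  refine Summable.of_nonneg_of_le (fun x => mul_nonneg ((hf a).1 x) (hF x).1)
    (fun x => ?_) (hf a).2.1
  calc f a x * F x ≤ f a x * 1 :=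
        mul_le_mul_of_nonneg_left (hF x).2 ((hf a).1 x)
    _ = f a x := mul_one _

lemma exp_bounds (μ : A → ℝ) (f : A → A' → ℝ) (F : A' → ℝ)
    (hf : ∀ a, IsSubdist (f a)) (hF : ∀ x, 0 ≤ F x ∧ F x ≤ 1) (a : A) :
    0 ≤ ∑' x, f a x * F x ∧ ∑' x, f a x * F x ≤ 1 := by
  constructor
  · exact tsum_nonneg (fun x => mul_nonneg ((hf a).1 x) (hF x).1)
  · calc ∑' x, f a x * F x ≤ ∑' x, f a x := by
          refine Summable.tsum_le_tsum (fun x => ?_) (slice_summable μ f F hf hF a) (hf a).2.1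
          calc f a x * F x ≤ f a x * 1 :=
                mul_le_mul_of_nonneg_left (hF x).2 ((hf a).1 x)
            _ = f a x := mul_one _
      _ ≤ 1 := (hf a).2.2

lemma prod_summable (μ : A → ℝ) (f : A → A' → ℝ) (F : A' → ℝ)
    (hμ : IsSubdist μ) (hf : ∀ a, IsSubdist (f a)) (hF : ∀ x, 0 ≤ F x ∧ F x ≤ 1) :
    Summable (fun p : A × A' => μ p.1 * (f p.1 p.2 * F p.2)) := by
  have hpos : (0 : (A × A') → ℝ) ≤ fun p : A × A' => μ p.1 * (f p.1 p.2 * F p.2) :=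
    fun p => mul_nonneg (hμ.1 p.1) (mul_nonneg ((hf p.1).1 p.2) (hF p.2).1)
  rw [summable_prod_of_nonneg hpos]
  constructor
  · intro a
    simpa using Summable.mul_left (μ a) (slice_summable μ f F hf hF a)
  · have heq : ∀ a, (∑' x, μ a * (f a x * F x))
        = μ a * ∑' x, f a x * F x := fun a => tsum_mul_left
    simp only []
    refine Summable.of_nonneg_of_le
      (fun a => tsum_nonneg fun x => mul_nonneg (hμ.1 a) (mul_nonneg ((hf a).1 x) (hF x).1))
      (fun a => ?_) hμ.2.1
    rw [heq a]
    calc μ a * ∑' x, f a x * F x ≤ μ a * 1 :=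
          mul_le_mul_of_nonneg_left (exp_bounds μ f F hf hF a).2 (hμ.1 a)
      _ = μ a := mul_one _

lemma dbind_exp (μ : A → ℝ) (f : A → A' → ℝ) (F : A' → ℝ)
    (hμ : IsSubdist μ) (hf : ∀ a, IsSubdist (f a)) (hF : ∀ x, 0 ≤ F x ∧ F x ≤ 1) :
    ∑' x, dbind μ f x * F x = ∑' a, μ a * ∑' x, f a x * F x := by
  have hsum := prod_summable μ f F hμ hf hF
  have h1 : ∀ x, dbind μ f x * F x = ∑' a, μ a * (f a x * F x) := by
    intro x
    simp only [dbind]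
    rw [← tsum_mul_right]
    congr 1; funext a; ring
  have h2 : ∀ a, μ a * ∑' x, f a x * F x = ∑' x, μ a * (f a x * F x) := fun a =>
    (tsum_mul_left).symm
  calc ∑' x, dbind μ f x * F x = ∑' x, ∑' a, μ a * (f a x * F x) := tsum_congr h1
    _ = ∑' a, ∑' x, μ a * (f a x * F x) := by
        exact Summable.tsum_comm' hsum
          (fun a => Summable.mul_left _ (slice_summable μ f F hf hF a))
          (fun x => by
            refine Summable.of_nonneg_of_le
              (fun a => mul_nonneg (hμ.1 a) (mul_nonneg ((hf a).1 x) (hF x).1))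
              (fun a => ?_) hμ.2.1
            calc μ a * (f a x * F x) ≤ μ a * 1 := by
                  refine mul_le_mul_of_nonneg_left ?_ (hμ.1 a)
                  calc f a x * F x ≤ 1 * 1 :=
                        mul_le_mul (le_trans (Summable.le_tsum (hf a).2.1 x
                          (fun _ _ => (hf a).1 _)) (hf a).2.2) (hF x).2 (hF x).1 one_pos.le
                    _ = 1 := one_mul 1
              _ = μ a := mul_one _)
    _ = ∑' a, μ a * ∑' x, f a x * F x := (tsum_congr h2).symm

end aux

theorem coupling_bind {A B A' B' : Type*}
    [Countable A] [Countable B] [Countable A'] [Countable B']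
    (μ₁ : A → ℝ) (μ₂ : B → ℝ) (f : A → A' → ℝ) (g : B → B' → ℝ)
    (hμ₁ : IsSubdist μ₁) (hμ₂ : IsSubdist μ₂)
    (hf : ∀ a, IsSubdist (f a)) (hg : ∀ b, IsSubdist (g b))
    (ε δ ε' δ' : ℝ) (hε : 0 ≤ ε) (hδ : 0 ≤ δ) (hε' : 0 ≤ ε') (hδ' : 0 ≤ δ')
    (Φ : A → B → Prop) (Ψ : A' → B' → Prop)
    (h₁ : ACoupling μ₁ μ₂ ε δ Φ)
    (h₂ : ∀ a b, Φ a b → ACoupling (f a) (g b) ε' δ' Ψ) :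
    ACoupling (dbind μ₁ f) (dbind μ₂ g) (ε + ε') (δ + δ') Ψ := by
  intro F G hF hG hFG
  set EF : A → ℝ := fun a => ∑' x, f a x * F x with hEF
  set EG : B → ℝ := fun b => ∑' y, g b y * G y with hEG
  have hEFb : ∀ a, 0 ≤ EF a ∧ EF a ≤ 1 := fun a => exp_bounds μ₁ f F hf hF a
  have hEGb : ∀ b, 0 ≤ EG b ∧ EG b ≤ 1 := fun b => exp_bounds μ₂ g G hg hG b
  set φ : A → ℝ := fun a => max 0 (EF a - δ') with hφ
  set ψ : B → ℝ := fun b => min 1 (Real.exp ε' * EG b) with hψ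
  have hφb : ∀ a, 0 ≤ φ a ∧ φ a ≤ 1 := by
    intro a
    refine ⟨le_max_left _ _, max_le one_pos.le ?_⟩
    linarith [(hEFb a).2]
  have hψb : ∀ b, 0 ≤ ψ b ∧ ψ b ≤ 1 := by
    intro b
    exact ⟨le_min one_pos.le (mul_nonneg (Real.exp_pos _).le (hEGb b).1), min_le_left _ _⟩
  have hφψ : ∀ a b, Φ a b → φ a ≤ ψ b := by
    intro a b hab
    have key := h₂ a b hab F G hF hG hFG
    refine max_le (le_min one_pos.le (mul_nonneg (Real.exp_pos _).le (hEGb b).1)) ?_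
    refine le_min (by linarith [(hEFb a).2]) (by linarith [key])
  have houter := h₁ φ ψ hφb hψb hφψ
  have hLHS : ∑' x, dbind μ₁ f x * F x = ∑' a, μ₁ a * EF a :=
    dbind_exp μ₁ f F hμ₁ hf hF
  have hRHS : ∑' y, dbind μ₂ g y * G y = ∑' b, μ₂ b * EG b :=
    dbind_exp μ₂ g G hμ₂ hg hG
  -- summability facts
  have hsumφ : Summable (fun a => μ₁ a * φ a) :=
    Summable.of_nonneg_of_le (fun a => mul_nonneg (hμ₁.1 a) (hφb a).1)
      (fun a => by
        calc μ₁ a * φ a ≤ μ₁ a * 1 := mul_le_mul_of_nonneg_left (hφb a).2 (hμ₁.1 a)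
          _ = μ₁ a := mul_one _) hμ₁.2.1
  have hsumψ : Summable (fun b => μ₂ b * ψ b) :=
    Summable.of_nonneg_of_le (fun b => mul_nonneg (hμ₂.1 b) (hψb b).1)
      (fun b => by
        calc μ₂ b * ψ b ≤ μ₂ b * 1 := mul_le_mul_of_nonneg_left (hψb b).2 (hμ₂.1 b)
          _ = μ₂ b := mul_one _) hμ₂.2.1
  have hsumEG : Summable (fun b => μ₂ b * EG b) :=
    Summable.of_nonneg_of_le (fun b => mul_nonneg (hμ₂.1 b) (hEGb b).1)
      (fun b => by
        calc μ₂ b * EG b ≤ μ₂ b * 1 := mul_le_mul_of_nonneg_left (hEGb b).2 (hμ₂.1 b)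
          _ = μ₂ b := mul_one _) hμ₂.2.1
  have hsumEF : Summable (fun a => μ₁ a * EF a) :=
    Summable.of_nonneg_of_le (fun a => mul_nonneg (hμ₁.1 a) (hEFb a).1)
      (fun a => by
        calc μ₁ a * EF a ≤ μ₁ a * 1 := mul_le_mul_of_nonneg_left (hEFb a).2 (hμ₁.1 a)
          _ = μ₁ a := mul_one _) hμ₁.2.1
  -- step 1: ∑ μ₁ EF ≤ ∑ μ₁ φ + δ'
  have step1 : ∑' a, μ₁ a * EF a ≤ (∑' a, μ₁ a * φ a) + δ' := by
    have h1 : ∑' a, μ₁ a * EF a ≤ ∑' a, (μ₁ a * φ a + μ₁ a * δ') := by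
      refine Summable.tsum_le_tsum (fun a => ?_) hsumEF (hsumφ.add (hμ₁.2.1.mul_right δ'))
      have : EF a ≤ φ a + δ' := by
        rcases le_max_iff.mpr (Or.inr (le_refl (EF a - δ'))) with h
        linarith [le_max_right 0 (EF a - δ')]
      calc μ₁ a * EF a ≤ μ₁ a * (φ a + δ') :=
            mul_le_mul_of_nonneg_left this (hμ₁.1 a)
        _ = μ₁ a * φ a + μ₁ a * δ' := by ring
    rw [Summable.tsum_add hsumφ (hμ₁.2.1.mul_right δ')] at h1
    have h2 : ∑' a, μ₁ a * δ' ≤ δ' := by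
      rw [tsum_mul_right]
      calc (∑' a, μ₁ a) * δ' ≤ 1 * δ' :=
            mul_le_mul_of_nonneg_right hμ₁.2.2 hδ'
        _ = δ' := one_mul _
    linarith
  -- step 2: ∑ μ₂ ψ ≤ exp ε' * ∑ μ₂ EG
  have step2 : ∑' b, μ₂ b * ψ b ≤ Real.exp ε' * ∑' b, μ₂ b * EG b := by
    rw [← tsum_mul_left]
    refine Summable.tsum_le_tsum (fun b => ?_) hsumψ (hsumEG.mul_left _)
    calc μ₂ b * ψ b ≤ μ₂ b * (Real.exp ε' * EG b) :=
          mul_le_mul_of_nonneg_left (min_le_right _ _) (hμ₂.1 b)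
      _ = Real.exp ε' * (μ₂ b * EG b) := by ring
  calc ∑' x, dbind μ₁ f x * F x = ∑' a, μ₁ a * EF a := hLHS
    _ ≤ (∑' a, μ₁ a * φ a) + δ' := step1
    _ ≤ (Real.exp ε * ∑' b, μ₂ b * ψ b + δ) + δ' := by linarith [houter]
    _ ≤ (Real.exp ε * (Real.exp ε' * ∑' b, μ₂ b * EG b) + δ) + δ' := by
        have := mul_le_mul_of_nonneg_left step2 (Real.exp_pos ε).le
        linarith
    _ = Real.exp (ε + ε') * ∑' y, dbind μ₂ g y * G y + (δ + δ') := by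
        rw [hRHS, Real.exp_add]; ring
end

section
/- Choice composition of approximate couplings: let μ₁ ∈ Distr(A), μ₂ ∈ Distr(B), f : A → Distr(A'), g : B → Distr(B'), a predicate Ξ ⊆ A, and relations Φ₁, Φ₂ ⊆ A×B, Ψ ⊆ A'×B', such that Φ₁, Φ₂ are disjoint in the sense that for all a, a', b with a ∈ Ξ and a' ∉ Ξ, either (a,b) ∉ Φ₁ or (a',b) ∉ Φ₂. Assume: (i) there is an (ε₁,δ₁)-approximate Φ₁-coupling of μ₁, μ₂; (ii) there is an (ε₂,δ₂)-approximate Φ₂-coupling of μ₁, μ₂; (iii) for all a ∈ Ξ with (a,b) ∈ Φ₁, there is an (ε₁',δ₁')-approximate Ψ-coupling of f(a), g(b); (iv) for all a ∉ Ξ with (a,b) ∈ Φ₂, there is an (ε₂',δ₂')-approximate Ψ-coupling of f(a), g(b). Then there is an (ε,δ)-approximate Ψ-coupling of (μ₁ >>= f) and (μ₂ >>= g), where ε = max(ε₁+ε₁', ε₂+ε₂') and δ = δ₁+δ₂+max(δ₁',δ₂'). -/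
/-- Expectation of a bounded nonneg function against a subdistribution is summable. -/
lemma expect_summable {X : Type*} {ν : X → ℝ} {h : X → ℝ}
    (hν : IsSubdist ν) (hh : ∀ x, 0 ≤ h x ∧ h x ≤ 1) :
    Summable (fun x => ν x * h x) := by
  refine hν.2.1.of_nonneg_of_le (fun x => mul_nonneg (hν.1 x) (hh x).1) (fun x => ?_)
  calc ν x * h x ≤ ν x * 1 := mul_le_mul_of_nonneg_left (hh x).2 (hν.1 x)
    _ = ν x := mul_one _

lemma expect_nonneg {X : Type*} {ν : X → ℝ} {h : X → ℝ}
    (hν : IsSubdist ν) (hh : ∀ x, 0 ≤ h x ∧ h x ≤ 1) :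
    0 ≤ ∑' x, ν x * h x :=
  tsum_nonneg (fun x => mul_nonneg (hν.1 x) (hh x).1)

lemma expect_le_one {X : Type*} {ν : X → ℝ} {h : X → ℝ}
    (hν : IsSubdist ν) (hh : ∀ x, 0 ≤ h x ∧ h x ≤ 1) :
    ∑' x, ν x * h x ≤ 1 := by
  refine le_trans (Summable.tsum_le_tsum (fun x => ?_) (expect_summable hν hh) hν.2.1) hν.2.2
  calc ν x * h x ≤ ν x * 1 := mul_le_mul_of_nonneg_left (hh x).2 (hν.1 x)
    _ = ν x := mul_one _

/-- Fubini for expectation of a bind. -/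
lemma dbind_expect {A A' : Type*} (μ : A → ℝ) (f : A → A' → ℝ) (h : A' → ℝ)
    (hμ : IsSubdist μ) (hf : ∀ a, IsSubdist (f a)) (hh : ∀ a', 0 ≤ h a' ∧ h a' ≤ 1) :
    ∑' a', dbind μ f a' * h a' = ∑' a, μ a * ∑' a', f a a' * h a' := by
  have hsum : Summable (Function.uncurry fun (a : A) (a' : A') => μ a * (f a a' * h a')) := by
    have hnn : 0 ≤ Function.uncurry fun (a : A) (a' : A') => μ a * (f a a' * h a') := by
      intro p
      exact mul_nonneg (hμ.1 _) (mul_nonneg ((hf _).1 _) (hh _).1)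
    rw [summable_prod_of_nonneg hnn]
    constructor
    · intro a
      exact ((expect_summable (hf a) hh).mul_left (μ a))
    · refine hμ.2.1.of_nonneg_of_le (fun a => ?_) (fun a => ?_)
      · rw [show (fun a' => Function.uncurry
            (fun (a : A) (a' : A') => μ a * (f a a' * h a')) (a, a'))
            = fun a' => μ a * (f a a' * h a') from rfl, tsum_mul_left]
        exact mul_nonneg (hμ.1 a) (expect_nonneg (hf a) hh)
      · rw [show (fun a' => Function.uncurry
            (fun (a : A) (a' : A') => μ a * (f a a' * h a')) (a, a'))
            = fun a' => μ a * (f a a' * h a') from rfl, tsum_mul_left]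
        calc μ a * ∑' a', f a a' * h a' ≤ μ a * 1 :=
              mul_le_mul_of_nonneg_left (expect_le_one (hf a) hh) (hμ.1 a)
          _ = μ a := mul_one _
  have key : ∑' (a' : A') (a : A), μ a * (f a a' * h a')
      = ∑' (a : A) (a' : A'), μ a * (f a a' * h a') := Summable.tsum_comm hsum
  calc ∑' a', dbind μ f a' * h a'
      = ∑' (a' : A') (a : A), μ a * (f a a' * h a') := by
        refine tsum_congr (fun a' => ?_)
        simp only [dbind]
        rw [← tsum_mul_right]
        exact tsum_congr (fun a => by ring)
    _ = ∑' (a : A) (a' : A'), μ a * (f a a' * h a') := key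
    _ = ∑' a, μ a * ∑' a', f a a' * h a' := by
        refine tsum_congr (fun a => ?_)
        rw [tsum_mul_left]

theorem choice_coupling_bind {A B A' B' : Type*}
    [Countable A] [Countable B] [Countable A'] [Countable B']
    (μ₁ : A → ℝ) (μ₂ : B → ℝ) (f : A → A' → ℝ) (g : B → B' → ℝ)
    (hμ₁ : IsSubdist μ₁) (hμ₂ : IsSubdist μ₂)
    (hf : ∀ a, IsSubdist (f a)) (hg : ∀ b, IsSubdist (g b))
    (Ξ : A → Prop) (Φ₁ Φ₂ : A → B → Prop) (Ψ : A' → B' → Prop)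
    (hdisj : ∀ a a' b, Ξ a → ¬ Ξ a' → ¬ Φ₁ a b ∨ ¬ Φ₂ a' b)
    (ε₁ δ₁ ε₂ δ₂ ε₁' δ₁' ε₂' δ₂' : ℝ)
    (hε₁ : 0 ≤ ε₁) (hδ₁ : 0 ≤ δ₁) (hε₂ : 0 ≤ ε₂) (hδ₂ : 0 ≤ δ₂)
    (hε₁' : 0 ≤ ε₁') (hδ₁' : 0 ≤ δ₁') (hε₂' : 0 ≤ ε₂') (hδ₂' : 0 ≤ δ₂')
    (h₁ : ACoupling μ₁ μ₂ ε₁ δ₁ Φ₁)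
    (h₂ : ACoupling μ₁ μ₂ ε₂ δ₂ Φ₂)
    (h₁' : ∀ a b, Ξ a → Φ₁ a b → ACoupling (f a) (g b) ε₁' δ₁' Ψ)
    (h₂' : ∀ a b, ¬ Ξ a → Φ₂ a b → ACoupling (f a) (g b) ε₂' δ₂' Ψ) :
    ACoupling (dbind μ₁ f) (dbind μ₂ g)
      (max (ε₁ + ε₁') (ε₂ + ε₂')) (δ₁ + δ₂ + max δ₁' δ₂') Ψ := by
  classical
  intro h₁f h₂g hb₁ hb₂ hΨ
  set ε : ℝ := max (ε₁ + ε₁') (ε₂ + ε₂') with hε_def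
  -- expectations
  set F : A → ℝ := fun a => ∑' a', f a a' * h₁f a' with hF_def
  set G : B → ℝ := fun b => ∑' b', g b b' * h₂g b' with hG_def
  have hF_bd : ∀ a, 0 ≤ F a ∧ F a ≤ 1 :=
    fun a => ⟨expect_nonneg (hf a) hb₁, expect_le_one (hf a) hb₁⟩
  have hG_bd : ∀ b, 0 ≤ G b ∧ G b ≤ 1 :=
    fun b => ⟨expect_nonneg (hg b) hb₂, expect_le_one (hg b) hb₂⟩
  -- rewrite both sides via Fubini
  rw [dbind_expect μ₁ f h₁f hμ₁ hf hb₁, dbind_expect μ₂ g h₂g hμ₂ hg hb₂]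
  -- inner coupling bounds
  have hinner₁ : ∀ a b, Ξ a → Φ₁ a b → F a ≤ Real.exp ε₁' * G b + δ₁' :=
    fun a b hΞ hΦ => h₁' a b hΞ hΦ h₁f h₂g hb₁ hb₂ hΨ
  have hinner₂ : ∀ a b, ¬ Ξ a → Φ₂ a b → F a ≤ Real.exp ε₂' * G b + δ₂' :=
    fun a b hΞ hΦ => h₂' a b hΞ hΦ h₁f h₂g hb₁ hb₂ hΨ
  -- truncated functions for the outer couplings
  set F₁ : A → ℝ := fun a => if Ξ a then max 0 (F a - δ₁') else 0 with hF₁_def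
  set F₂ : A → ℝ := fun a => if Ξ a then 0 else max 0 (F a - δ₂') with hF₂_def
  set G₁ : B → ℝ := fun b => if ∃ a, Ξ a ∧ Φ₁ a b then min 1 (Real.exp ε₁' * G b) else 0
    with hG₁_def
  set G₂ : B → ℝ := fun b => if ∃ a, ¬ Ξ a ∧ Φ₂ a b then min 1 (Real.exp ε₂' * G b) else 0
    with hG₂_def
  have hF₁_bd : ∀ a, 0 ≤ F₁ a ∧ F₁ a ≤ 1 := by
    intro a
    simp only [hF₁_def]
    split
    · exact ⟨le_max_left _ _, max_le zero_le_one (by linarith [(hF_bd a).2])⟩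
    · exact ⟨le_refl 0, zero_le_one⟩
  have hF₂_bd : ∀ a, 0 ≤ F₂ a ∧ F₂ a ≤ 1 := by
    intro a
    simp only [hF₂_def]
    split
    · exact ⟨le_refl 0, zero_le_one⟩
    · exact ⟨le_max_left _ _, max_le zero_le_one (by linarith [(hF_bd a).2])⟩
  have hG₁_bd : ∀ b, 0 ≤ G₁ b ∧ G₁ b ≤ 1 := by
    intro b
    simp only [hG₁_def]
    split
    · exact ⟨le_min zero_le_one (mul_nonneg (Real.exp_pos _).le (hG_bd b).1), min_le_left _ _⟩
    · exact ⟨le_refl 0, zero_le_one⟩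
  have hG₂_bd : ∀ b, 0 ≤ G₂ b ∧ G₂ b ≤ 1 := by
    intro b
    simp only [hG₂_def]
    split
    · exact ⟨le_min zero_le_one (mul_nonneg (Real.exp_pos _).le (hG_bd b).1), min_le_left _ _⟩
    · exact ⟨le_refl 0, zero_le_one⟩
  -- relation conditions
  have hrel₁ : ∀ a b, Φ₁ a b → F₁ a ≤ G₁ b := by
    intro a b hΦ
    simp only [hF₁_def, hG₁_def]
    by_cases hΞ : Ξ a
    · rw [if_pos hΞ, if_pos ⟨a, hΞ, hΦ⟩]
      refine max_le (le_min zero_le_one (mul_nonneg (Real.exp_pos _).le (hG_bd b).1)) ?_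
      refine le_min (by linarith [(hF_bd a).2]) ?_
      linarith [hinner₁ a b hΞ hΦ]
    · rw [if_neg hΞ]
      split
      · exact le_min zero_le_one (mul_nonneg (Real.exp_pos _).le (hG_bd b).1)
      · exact le_refl 0
  have hrel₂ : ∀ a b, Φ₂ a b → F₂ a ≤ G₂ b := by
    intro a b hΦ
    simp only [hF₂_def, hG₂_def]
    by_cases hΞ : Ξ a
    · rw [if_pos hΞ]
      split
      · exact le_min zero_le_one (mul_nonneg (Real.exp_pos _).le (hG_bd b).1)
      · exact le_refl 0
    · rw [if_neg hΞ, if_pos ⟨a, hΞ, hΦ⟩]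
      refine max_le (le_min zero_le_one (mul_nonneg (Real.exp_pos _).le (hG_bd b).1)) ?_
      refine le_min (by linarith [(hF_bd a).2]) ?_
      linarith [hinner₂ a b hΞ hΦ]
  -- apply outer couplings
  have houter₁ : ∑' a, μ₁ a * F₁ a ≤ Real.exp ε₁ * ∑' b, μ₂ b * G₁ b + δ₁ :=
    h₁ F₁ G₁ hF₁_bd hG₁_bd hrel₁
  have houter₂ : ∑' a, μ₁ a * F₂ a ≤ Real.exp ε₂ * ∑' b, μ₂ b * G₂ b + δ₂ :=
    h₂ F₂ G₂ hF₂_bd hG₂_bd hrel₂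
  -- summability facts
  have sF : Summable (fun a => μ₁ a * F a) := expect_summable hμ₁ hF_bd
  have sF₁ : Summable (fun a => μ₁ a * F₁ a) := expect_summable hμ₁ hF₁_bd
  have sF₂ : Summable (fun a => μ₁ a * F₂ a) := expect_summable hμ₁ hF₂_bd
  have sG : Summable (fun b => μ₂ b * G b) := expect_summable hμ₂ hG_bd
  have sG₁ : Summable (fun b => μ₂ b * G₁ b) := expect_summable hμ₂ hG₁_bd
  have sG₂ : Summable (fun b => μ₂ b * G₂ b) := expect_summable hμ₂ hG₂_bd
  -- pointwise decomposition of F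
  have hdec : ∀ a, μ₁ a * F a ≤ μ₁ a * F₁ a + μ₁ a * F₂ a + μ₁ a * max δ₁' δ₂' := by
    intro a
    have hμa := hμ₁.1 a
    by_cases hΞ : Ξ a
    · have : F₁ a = max 0 (F a - δ₁') := by simp [hF₁_def, hΞ]
      have h2 : F₂ a = 0 := by simp [hF₂_def, hΞ]
      rw [this, h2]
      have : F a ≤ max 0 (F a - δ₁') + max δ₁' δ₂' := by
        rcases le_max_iff.mpr (Or.inl (le_refl (F a - δ₁'))) with h
        have := le_max_left δ₁' δ₂'
        nlinarith [le_max_right 0 (F a - δ₁'), le_max_left δ₁' δ₂']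
      nlinarith [this]
    · have h1 : F₁ a = 0 := by simp [hF₁_def, hΞ]
      have : F₂ a = max 0 (F a - δ₂') := by simp [hF₂_def, hΞ]
      rw [this, h1]
      have : F a ≤ max 0 (F a - δ₂') + max δ₁' δ₂' := by
        nlinarith [le_max_right 0 (F a - δ₂'), le_max_right δ₁' δ₂']
      nlinarith [this]
  have hmaxδ : (0:ℝ) ≤ max δ₁' δ₂' := le_trans hδ₁' (le_max_left _ _)
  have step1 : ∑' a, μ₁ a * F a
      ≤ (∑' a, μ₁ a * F₁ a) + (∑' a, μ₁ a * F₂ a) + max δ₁' δ₂' := by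
    have smax : Summable (fun a => μ₁ a * max δ₁' δ₂') := hμ₁.2.1.mul_right _
    have hsum3 : Summable (fun a => μ₁ a * F₁ a + μ₁ a * F₂ a + μ₁ a * max δ₁' δ₂') :=
      (sF₁.add sF₂).add smax
    calc ∑' a, μ₁ a * F a
        ≤ ∑' a, (μ₁ a * F₁ a + μ₁ a * F₂ a + μ₁ a * max δ₁' δ₂') :=
          Summable.tsum_le_tsum hdec sF hsum3
      _ = (∑' a, μ₁ a * F₁ a) + (∑' a, μ₁ a * F₂ a) + (∑' a, μ₁ a * max δ₁' δ₂') := by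
          rw [Summable.tsum_add (sF₁.add sF₂) smax, Summable.tsum_add sF₁ sF₂]
      _ ≤ (∑' a, μ₁ a * F₁ a) + (∑' a, μ₁ a * F₂ a) + max δ₁' δ₂' := by
          have : ∑' a, μ₁ a * max δ₁' δ₂' = (∑' a, μ₁ a) * max δ₁' δ₂' := tsum_mul_right
          rw [this]
          have := mul_le_of_le_one_left hmaxδ hμ₁.2.2
          linarith [mul_le_mul_of_nonneg_right hμ₁.2.2 hmaxδ, one_mul (max δ₁' δ₂')]
  -- combine the two outer bounds with disjointness
  have hkey : ∀ b, Real.exp ε₁ * (μ₂ b * G₁ b) + Real.exp ε₂ * (μ₂ b * G₂ b)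
      ≤ Real.exp ε * (μ₂ b * G b) := by
    intro b
    have hμb := hμ₂.1 b
    have hGb := (hG_bd b).1
    by_cases hb1 : ∃ a, Ξ a ∧ Φ₁ a b
    · have hb2 : ¬ ∃ a, ¬ Ξ a ∧ Φ₂ a b := by
        rintro ⟨a', ha', hΦ'⟩
        obtain ⟨a, ha, hΦ⟩ := hb1
        rcases hdisj a a' b ha ha' with h | h
        · exact h hΦ
        · exact h hΦ'
      have e1 : G₁ b = min 1 (Real.exp ε₁' * G b) := by simp [hG₁_def, hb1]
      have e2 : G₂ b = 0 := by simp [hG₂_def, hb2]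
      rw [e1, e2, mul_zero, mul_zero, add_zero]
      have h1 : min 1 (Real.exp ε₁' * G b) ≤ Real.exp ε₁' * G b := min_le_right _ _
      have h2 : Real.exp ε₁ * Real.exp ε₁' = Real.exp (ε₁ + ε₁') := (Real.exp_add _ _).symm
      have h3 : Real.exp (ε₁ + ε₁') ≤ Real.exp ε := Real.exp_le_exp.mpr (le_max_left _ _)
      calc Real.exp ε₁ * (μ₂ b * min 1 (Real.exp ε₁' * G b))
          ≤ Real.exp ε₁ * (μ₂ b * (Real.exp ε₁' * G b)) := by
            apply mul_le_mul_of_nonneg_left (mul_le_mul_of_nonneg_left h1 hμb)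
              (Real.exp_pos _).le
        _ = Real.exp (ε₁ + ε₁') * (μ₂ b * G b) := by rw [← h2]; ring
        _ ≤ Real.exp ε * (μ₂ b * G b) :=
            mul_le_mul_of_nonneg_right h3 (mul_nonneg hμb hGb)
    · have e1 : G₁ b = 0 := by simp [hG₁_def, hb1]
      rw [e1, mul_zero, mul_zero, zero_add]
      by_cases hb2 : ∃ a, ¬ Ξ a ∧ Φ₂ a b
      · have e2 : G₂ b = min 1 (Real.exp ε₂' * G b) := by simp [hG₂_def, hb2]
        rw [e2]
        have h1 : min 1 (Real.exp ε₂' * G b) ≤ Real.exp ε₂' * G b := min_le_right _ _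
        have h2 : Real.exp ε₂ * Real.exp ε₂' = Real.exp (ε₂ + ε₂') := (Real.exp_add _ _).symm
        have h3 : Real.exp (ε₂ + ε₂') ≤ Real.exp ε := Real.exp_le_exp.mpr (le_max_right _ _)
        calc Real.exp ε₂ * (μ₂ b * min 1 (Real.exp ε₂' * G b))
            ≤ Real.exp ε₂ * (μ₂ b * (Real.exp ε₂' * G b)) := by
              apply mul_le_mul_of_nonneg_left (mul_le_mul_of_nonneg_left h1 hμb)
                (Real.exp_pos _).le
          _ = Real.exp (ε₂ + ε₂') * (μ₂ b * G b) := by rw [← h2]; ring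
          _ ≤ Real.exp ε * (μ₂ b * G b) :=
              mul_le_mul_of_nonneg_right h3 (mul_nonneg hμb hGb)
      · have e2 : G₂ b = 0 := by simp [hG₂_def, hb2]
        rw [e2, mul_zero, mul_zero]
        exact mul_nonneg (Real.exp_pos _).le (mul_nonneg hμb hGb)
  have step2 : Real.exp ε₁ * (∑' b, μ₂ b * G₁ b) + Real.exp ε₂ * (∑' b, μ₂ b * G₂ b)
      ≤ Real.exp ε * ∑' b, μ₂ b * G b := by
    calc Real.exp ε₁ * (∑' b, μ₂ b * G₁ b) + Real.exp ε₂ * (∑' b, μ₂ b * G₂ b)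
        = ∑' b, (Real.exp ε₁ * (μ₂ b * G₁ b) + Real.exp ε₂ * (μ₂ b * G₂ b)) := by
          rw [Summable.tsum_add (sG₁.mul_left _) (sG₂.mul_left _), tsum_mul_left, tsum_mul_left]
      _ ≤ ∑' b, Real.exp ε * (μ₂ b * G b) :=
          Summable.tsum_le_tsum hkey ((sG₁.mul_left _).add (sG₂.mul_left _)) (sG.mul_left _)
      _ = Real.exp ε * ∑' b, μ₂ b * G b := tsum_mul_left
  -- finish
  calc ∑' a, μ₁ a * F a
      ≤ (∑' a, μ₁ a * F₁ a) + (∑' a, μ₁ a * F₂ a) + max δ₁' δ₂' := step1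
    _ ≤ (Real.exp ε₁ * ∑' b, μ₂ b * G₁ b + δ₁) + (Real.exp ε₂ * ∑' b, μ₂ b * G₂ b + δ₂)
        + max δ₁' δ₂' := by linarith [houter₁, houter₂]
    _ ≤ Real.exp ε * (∑' b, μ₂ b * G b) + (δ₁ + δ₂ + max δ₁' δ₂') := by linarith [step2]
end

section
/- Characterization of differential privacy via approximate couplings: a function f : DB → Distr(X) is (ε,δ)-differentially private if and only if for all adjacent b, b' ∈ DB there exists an (ε,δ)-approximate coupling between f(b) and f(b') for the equality relation on X. -/
def DP {DB X : Type*} (adj : DB → DB → Prop) (f : DB → X → ℝ) (ε δ : ℝ) : Prop :=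
  ∀ x y, adj x y → ∀ S : Set X,
    ∑' s : S, f x s ≤ Real.exp ε * ∑' s : S, f y s + δ

theorem dp_iff_coupling {DB X : Type*} [Countable X]
    (adj : DB → DB → Prop) (f : DB → X → ℝ) (hf : ∀ b, IsSubdist (f b))
    (ε δ : ℝ) (hε : 0 ≤ ε) (hδ : 0 ≤ δ) :
    DP adj f ε δ ↔
      ∀ b b', adj b b' → ACoupling (f b) (f b') ε δ (fun x x' => x = x') := by
  classical
  constructor
  · intro hDP b b' hadj h₁ h₂ hh₁ hh₂ hle
    obtain ⟨hpos₁, hsum₁, _⟩ := hf b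
    obtain ⟨hpos₂, hsum₂, _⟩ := hf b'
    set μ₁ := f b with hμ₁def
    set μ₂ := f b' with hμ₂def
    set S : Set X := {x | Real.exp ε * μ₂ x < μ₁ x} with hSdef
    set d : X → ℝ := fun x => μ₁ x - Real.exp ε * μ₂ x with hddef
    have hsd : Summable d := hsum₁.sub (hsum₂.mul_left _)
    have hsind : Summable (S.indicator d) := hsd.indicator S
    have hsm1 : Summable (fun x => μ₁ x * h₁ x) := by
      apply Summable.of_nonneg_of_le (fun x => mul_nonneg (hpos₁ x) (hh₁ x).1)
        (fun x => mul_le_of_le_one_right (hpos₁ x) (hh₁ x).2) hsum₁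
    have hsm2 : Summable (fun x => μ₂ x * h₂ x) := by
      apply Summable.of_nonneg_of_le (fun x => mul_nonneg (hpos₂ x) (hh₂ x).1)
        (fun x => mul_le_of_le_one_right (hpos₂ x) (hh₂ x).2) hsum₂
    -- key: the indicator sum is at most δ, by DP applied to S
    have hkey : ∑' x, S.indicator d x ≤ δ := by
      have h1 : ∑' x, S.indicator d x = ∑' s : S, d s := (tsum_subtype S d).symm
      have h2 : ∑' s : S, d s = (∑' s : S, μ₁ s) - Real.exp ε * ∑' s : S, μ₂ s := by
        rw [← tsum_mul_left]
        exact Summable.tsum_sub (hsum₁.subtype S) ((hsum₂.mul_left (Real.exp ε)).subtype S)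
      have h3 := hDP b b' hadj S
      rw [h1, h2]
      linarith
    -- termwise bound
    have hterm : ∀ x, μ₁ x * h₁ x ≤ S.indicator d x + Real.exp ε * (μ₂ x * h₂ x) := by
      intro x
      have hle' : h₁ x ≤ h₂ x := hle x x rfl
      by_cases hx : x ∈ S
      · rw [Set.indicator_of_mem hx]
        have hxS : Real.exp ε * μ₂ x < μ₁ x := hx
        have hE : 0 < Real.exp ε := Real.exp_pos ε
        show μ₁ x * h₁ x ≤ (μ₁ x - Real.exp ε * μ₂ x) + Real.exp ε * (μ₂ x * h₂ x)
        nlinarith [mul_nonneg (sub_nonneg.mpr hxS.le) (sub_nonneg.mpr (hh₁ x).2),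
          mul_nonneg (mul_nonneg hE.le (hpos₂ x)) (sub_nonneg.mpr hle')]
      · rw [Set.indicator_of_notMem hx]
        have hxS : μ₁ x ≤ Real.exp ε * μ₂ x := not_lt.mp hx
        have := (hh₁ x).1
        have := (hh₁ x).2
        have := hpos₁ x
        have hE : 0 < Real.exp ε := Real.exp_pos ε
        nlinarith [mul_nonneg (mul_nonneg hE.le (hpos₂ x)) (sub_nonneg.mpr hle')]
    calc ∑' x, μ₁ x * h₁ x
        ≤ ∑' x, (S.indicator d x + Real.exp ε * (μ₂ x * h₂ x)) := by
          apply Summable.tsum_le_tsum hterm hsm1 (hsind.add (hsm2.mul_left _))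
      _ = (∑' x, S.indicator d x) + Real.exp ε * ∑' x, μ₂ x * h₂ x := by
          rw [Summable.tsum_add hsind (hsm2.mul_left _), tsum_mul_left]
      _ ≤ Real.exp ε * (∑' x, μ₂ x * h₂ x) + δ := by linarith
  · intro hC b b' hadj S
    obtain ⟨hpos₁, hsum₁, _⟩ := hf b
    obtain ⟨hpos₂, hsum₂, _⟩ := hf b'
    have h01 : ∀ x : X, 0 ≤ S.indicator (fun _ => (1:ℝ)) x ∧ S.indicator (fun _ => (1:ℝ)) x ≤ 1 := by
      intro x
      by_cases hx : x ∈ S <;> simp [Set.indicator_of_mem, Set.indicator_of_notMem, hx]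
    have h := hC b b' hadj (S.indicator (fun _ => (1:ℝ))) (S.indicator (fun _ => (1:ℝ)))
      h01 h01 (fun a c hac => by rw [hac])
    have hrw : ∀ (μ : X → ℝ), (fun x => μ x * S.indicator (fun _ => (1:ℝ)) x) = S.indicator μ := by
      intro μ
      funext x
      by_cases hx : x ∈ S <;> simp [Set.indicator_of_mem, Set.indicator_of_notMem, hx]
    rw [hrw (f b), hrw (f b')] at h
    rw [tsum_subtype S (f b), tsum_subtype S (f b')]
    exact h
end

section
/- Shift coupling for discrete Laplacians: for any ε > 0, integers m, m', k, and nonnegative integer c with |k + m − m'| ≤ c, there exists a (c·ε, 0)-approximate coupling between Lap_ε^m and Lap_ε^{m'} for the relation {(z, z') : z' = z + k}. -/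
open scoped Classical

/-
Translation by `k` moves the centre `m` to `m + k`, which lies within `c` of `m'`. By the triangle
inequality the two discrete Laplacian densities then differ pointwise by a factor at most `e^{cε}`
along the bijection `z ↦ z + k`, and coupling every `z` with `z + k` gives the approximate coupling.
-/

open Real

theorem summable_exp_neg_mul_abs_int {ε : ℝ} (hε : 0 < ε) :
    Summable fun z : ℤ => exp (-ε * |(z : ℝ)|) := by
  have hgeom : Summable fun n : ℕ => exp (-ε * n) := by
    simpa only [mul_comm, exp_nat_mul] using
      summable_geometric_of_lt_one (exp_nonneg (-ε)) (exp_lt_one_iff.mpr (neg_neg_of_pos hε))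
  refine .of_nat_of_neg ?_ ?_ <;> simpa using hgeom

theorem summable_exp_neg_mul_abs_sub_int {ε : ℝ} (hε : 0 < ε) (m : ℤ) :
    Summable fun z : ℤ => exp (-ε * |(z : ℝ) - m|) := by
  simpa [Function.comp_def] using
    (Equiv.subRight m).summable_iff.mpr (summable_exp_neg_mul_abs_int hε)

theorem lapW_nonneg (ε : ℝ) : 0 ≤ lapW ε := tsum_nonneg fun _ => (exp_pos _).le

theorem lapPMF_nonneg (ε : ℝ) (m v : ℤ) : 0 ≤ lapPMF ε m v :=
  div_nonneg (exp_pos _).le (lapW_nonneg ε)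

theorem summable_lapPMF {ε : ℝ} (hε : 0 < ε) (m : ℤ) : Summable (lapPMF ε m) :=
  (summable_exp_neg_mul_abs_sub_int hε m).div_const _

theorem lapPMF_le_exp_mul_lapPMF {ε r : ℝ} (hε : 0 ≤ ε) {m m' v v' : ℤ}
    (h : |((v' : ℝ) - m') - (v - m)| ≤ r) :
    lapPMF ε m v ≤ exp (r * ε) * lapPMF ε m' v' := by
  rw [lapPMF, lapPMF, ← mul_div_assoc, ← exp_add]
  refine div_le_div_of_nonneg_right (exp_le_exp.mpr ?_) (lapW_nonneg ε)
  have := (abs_sub_abs_le_abs_sub ((v' : ℝ) - m') (v - m)).trans h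
  nlinarith

theorem ACoupling.of_le_exp_mul_equiv {A B : Type*} {μ₁ : A → ℝ} {μ₂ : B → ℝ} {ε : ℝ}
    {Φ : A → B → Prop} (σ : A ≃ B) (hΦ : ∀ a, Φ a (σ a)) (hμ₁ : ∀ a, 0 ≤ μ₁ a)
    (hμ₂ : Summable μ₂) (hle : ∀ a, μ₁ a ≤ exp ε * μ₂ (σ a)) :
    ACoupling μ₁ μ₂ ε 0 Φ := by
  intro f g hf hg hfg
  have hμ₂_nonneg : ∀ b, 0 ≤ μ₂ b := fun b => by
    simpa using nonneg_of_mul_nonneg_right ((hμ₁ _).trans (hle (σ.symm b))) (exp_pos ε)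
  have hμ₂g : Summable fun b => μ₂ b * g b :=
    .of_nonneg_of_le (fun b => mul_nonneg (hμ₂_nonneg b) (hg b).1)
      (fun b => mul_le_of_le_one_right (hμ₂_nonneg b) (hg b).2) hμ₂
  have hpt : ∀ a, μ₁ a * f a ≤ exp ε * (μ₂ (σ a) * g (σ a)) := fun a =>
    calc μ₁ a * f a ≤ exp ε * μ₂ (σ a) * g (σ a) :=
          mul_le_mul (hle a) (hfg a _ (hΦ a)) (hf a).1 (by have := hμ₂_nonneg (σ a); positivity)
      _ = exp ε * (μ₂ (σ a) * g (σ a)) := mul_assoc ..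
  have hmajor : Summable fun a => exp ε * (μ₂ (σ a) * g (σ a)) :=
    (σ.summable_iff.mpr hμ₂g).mul_left _
  calc ∑' a, μ₁ a * f a
      ≤ ∑' a, exp ε * (μ₂ (σ a) * g (σ a)) :=
        Summable.tsum_le_tsum hpt
          (.of_nonneg_of_le (fun a => mul_nonneg (hμ₁ a) (hf a).1) hpt hmajor) hmajor
    _ = exp ε * ∑' b, μ₂ b * g b + 0 := by
        rw [tsum_mul_left, σ.tsum_eq (fun b => μ₂ b * g b), add_zero]

theorem laplace_shift_coupling (ε : ℝ) (hε : 0 < ε) (m m' k : ℤ) (c : ℕ)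
    (hk : |k + m - m'| ≤ (c : ℤ)) :
    ACoupling (lapPMF ε m) (lapPMF ε m') ((c : ℝ) * ε) 0
      (fun z z' => z' = z + k) := by
  refine .of_le_exp_mul_equiv (Equiv.addRight k) (fun _ => rfl) (lapPMF_nonneg ε m)
    (summable_lapPMF hε m') fun z => lapPMF_le_exp_mul_lapPMF hε.le ?_
  calc |((z + k : ℤ) : ℝ) - m' - (z - m)| = |((k + m - m' : ℤ) : ℝ)| := by push_cast; ring_nf
    _ ≤ c := by exact_mod_cast hk
end
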